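/- Let S₁,S₂ ⊆ {0,...,D-1}, π a uniform random permutation, k | D. Then Cov(N_mat, N_emp) ≤ 0, where N_mat is the number of matched bins and N_emp the number of jointly empty bins, assuming f = |S₁∪S₂| ≤ D(1-2/k) and f ≥ 1. -/

import Mathlib

open scoped BigOperators Classical

/-- Restriction of the hashed set `S` to the `j`-th of `k` equal consecutive bins of
`{0,...,D-1}` (each bin has length `D/k`). -/
def hashBin (D k : ℕ) (S : Finset (Fin D)) (j : ℕ) : Finset (Fin D) :=
  S.filter (fun x => x.val / (D / k) = j)

/-- The `j`-th bin is matched: both `π(S₁)` and `π(S₂)` are nonempty in the bin and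
their smallest elements in the bin coincide. -/
def matchedBin (D k : ℕ) (π : Equiv.Perm (Fin D)) (S₁ S₂ : Finset (Fin D)) (j : ℕ) : Prop :=
  (hashBin D k (S₁.image π) j).Nonempty ∧ (hashBin D k (S₂.image π) j).Nonempty ∧
    (hashBin D k (S₁.image π) j).min = (hashBin D k (S₂.image π) j).min

/-- The number of matched bins. -/
noncomputable def Nmat (D k : ℕ) (π : Equiv.Perm (Fin D)) (S₁ S₂ : Finset (Fin D)) : ℕ :=
  ((Finset.range k).filter (fun j => matchedBin D k π S₁ S₂ j)).card

/-- The number of jointly empty bins: bins where both `π(S₁)` and `π(S₂)` are empty. -/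
noncomputable def NempJ (D k : ℕ) (π : Equiv.Perm (Fin D)) (S₁ S₂ : Finset (Fin D)) : ℕ :=
  ((Finset.range k).filter (fun j =>
    hashBin D k (S₁.image π) j = ∅ ∧ hashBin D k (S₂.image π) j = ∅)).card



private lemma aux_DB (D m f : ℕ) (hm : 1 ≤ m) :
    D * (D - m).descFactorial f ≤ (D - f) * D.descFactorial f := by
  rcases D with _ | n
  · simp
  · calc (n+1) * ((n+1) - m).descFactorial f
        ≤ (n+1) * n.descFactorial f :=
          Nat.mul_le_mul_left _ (Nat.descFactorial_le f (by omega))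
      _ = (n+1).descFactorial (f+1) := (Nat.succ_descFactorial_succ n f).symm
      _ = ((n+1) - f) * (n+1).descFactorial f := Nat.descFactorial_succ _ _

private lemma key_ineq (k m : ℕ) (hm : 1 ≤ m) (hk : 2 ≤ k) :
    ∀ f, f ≤ k*m - 2*m →
    k * ((k*m - m).descFactorial f * (k*m - m).descFactorial f)
      ≤ (k*m).descFactorial f * (k*m - m).descFactorial f
        + (k-1) * ((k*m).descFactorial f * (k*m - 2*m).descFactorial f) := by
  have h2m : 2*m ≤ k*m := Nat.mul_le_mul_right m hk
  intro f
  induction f with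
  | zero => intro _; simp; omega
  | succ f ih =>
    intro hf
    have hf' : f ≤ k*m - 2*m := by omega
    have IH := ih hf'
    set D := k*m with hD
    set A := D.descFactorial f
    set B := (D - m).descFactorial f
    set C := (D - 2*m).descFactorial f
    have hA : D.descFactorial (f+1) = (D - f) * A := Nat.descFactorial_succ _ _
    have hB : (D - m).descFactorial (f+1) = (D - m - f) * B := Nat.descFactorial_succ _ _
    have hC : (D - 2*m).descFactorial (f+1) = (D - 2*m - f) * C := Nat.descFactorial_succ _ _
    rw [hA, hB, hC]
    set a := D - f with ha
    set b := D - m - f with hb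
    set c := D - 2*m - f with hc
    have hab : a = c + 2*m := by omega
    have hbc : b = c + m := by omega
    have hbb : b * b = a * c + m * m := by rw [hab, hbc]; ring
    have aux : (k*m) * B ≤ a * A := aux_DB D m f hm
    have aux2 : (k*m) * B * (B * m) ≤ a * A * (B * m) := Nat.mul_le_mul_right _ aux
    have IH2 : k * (B * B) * (a * c) ≤ (A * B + (k-1)*(A*C)) * (a * c) :=
      Nat.mul_le_mul_right _ IH
    have expand : k * ((b*B) * (b*B)) = k * (B*B) * (a*c) + (k*m) * B * (B*m) := by
      have e1 : k * ((b*B) * (b*B)) = k * (b*b) * (B*B) := by ring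
      rw [e1, hbb]; ring
    rw [expand]
    have final : k * (B*B) * (a*c) + (k*m) * B * (B*m)
        ≤ (A * B + (k-1)*(A*C)) * (a*c) + a * A * (B * m) := by
      exact Nat.add_le_add IH2 aux2
    refine final.trans ?_
    have : (A * B + (k-1)*(A*C)) * (a*c) + a * A * (B * m)
        = (a*A) * (b*B) + (k-1) * ((a*A) * (c*C)) := by
      rw [hbc]; ring
    omega



open Finset Equiv

private lemma card_fix_pointwise (D : ℕ) (V : Finset (Fin D)) :
    (Finset.univ.filter (fun τ : Equiv.Perm (Fin D) => ∀ x ∈ V, τ x = x)).card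
      = Nat.factorial (D - V.card) := by
  rw [← Fintype.card_subtype]
  have e1 : {τ : Equiv.Perm (Fin D) // ∀ x ∈ V, τ x = x}
      ≃ {τ : Equiv.Perm (Fin D) // ∀ a, ¬(a ∉ V) → τ a = a} :=
    Equiv.subtypeEquivRight (by intro τ; simp)
  have e2 := (Equiv.Perm.subtypeEquivSubtypePerm (fun a : Fin D => a ∉ V)).symm
  have hcard : Fintype.card {a : Fin D // a ∉ V} = D - V.card := by
    simp [Fintype.card_subtype_compl]
  rw [Fintype.card_congr (e1.trans e2), Fintype.card_perm, hcard]

private lemma count_perm (D : ℕ) (U C' : Finset (Fin D)) :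
    (Finset.univ.filter (fun π : Equiv.Perm (Fin D) => ∀ x ∈ U, π x ∈ C')).card
      = C'.card.descFactorial U.card * Nat.factorial (D - U.card) := by
  set J : Finset ({x // x ∈ U} → Fin D) :=
    Finset.univ.filter (fun g => Function.Injective g ∧ ∀ x, g x ∈ C') with hJ
  have hmap : ∀ π ∈ (Finset.univ.filter
      (fun π : Equiv.Perm (Fin D) => ∀ x ∈ U, π x ∈ C')),
      (fun x : {x // x ∈ U} => π x.1) ∈ J := by
    intro π hπ
    simp only [Finset.mem_filter, Finset.mem_univ, true_and] at hπ
    rw [hJ, Finset.mem_filter]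
    exact ⟨Finset.mem_univ _, fun a b h => Subtype.ext (π.injective h), fun x => hπ x.1 x.2⟩
  rw [Finset.card_eq_sum_card_fiberwise hmap]
  have hfiber : ∀ g ∈ J,
      ((Finset.univ.filter (fun π : Equiv.Perm (Fin D) => ∀ x ∈ U, π x ∈ C')).filter
        (fun π => (fun x : {x // x ∈ U} => π x.1) = g)).card = Nat.factorial (D - U.card) := by
    intro g hg
    simp only [hJ, Finset.mem_filter, Finset.mem_univ, true_and] at hg
    obtain ⟨hinj, hgC⟩ := hg
    -- extension of g to a permutation
    have hext : ∃ π₀ : Equiv.Perm (Fin D), ∀ x : {x // x ∈ U}, π₀ x.1 = g x := by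
      let e : {x // x ∈ U} ≃ {y : Fin D // y ∈ Set.range g} :=
        (Equiv.ofInjective g hinj).trans (Equiv.subtypeEquivRight (by intro y; simp [Set.range]))
      refine ⟨Equiv.extendSubtype e, fun x => ?_⟩
      have := Equiv.extendSubtype_apply_of_mem e x.1 x.2
      rw [this]
      simp [e, Equiv.ofInjective]
    obtain ⟨π₀, hπ₀⟩ := hext
    have hset : ((Finset.univ.filter
          (fun π : Equiv.Perm (Fin D) => ∀ x ∈ U, π x ∈ C')).filter
        (fun π => (fun x : {x // x ∈ U} => π x.1) = g))
        = Finset.univ.filter (fun π : Equiv.Perm (Fin D) => ∀ x, ∀ hx : x ∈ U, π x = g ⟨x, hx⟩) := by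
      ext π
      simp only [Finset.mem_filter, Finset.mem_univ, true_and, funext_iff]
      constructor
      · rintro ⟨-, h⟩ x hx
        exact h ⟨x, hx⟩
      · intro h
        refine ⟨fun x hx => ?_, fun x => h x.1 x.2⟩
        rw [h x hx]; exact hgC _
    rw [hset, ← card_fix_pointwise D U]
    apply Finset.card_bij (fun π _ => π₀⁻¹ * π)
    · intro π hπ
      simp only [Finset.mem_filter, Finset.mem_univ, true_and] at hπ ⊢
      intro x hx
      have : π x = π₀ x := by rw [hπ x hx, hπ₀ ⟨x, hx⟩]
      simp [Equiv.Perm.mul_apply, this]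
    · intro π hπ π' hπ' h
      exact mul_left_cancel h
    · intro τ hτ
      simp only [Finset.mem_filter, Finset.mem_univ, true_and] at hτ
      refine ⟨π₀ * τ, ?_, by group⟩
      simp only [Finset.mem_filter, Finset.mem_univ, true_and]
      intro x hx
      have : τ x = x := hτ x hx
      simp [Equiv.Perm.mul_apply, this, hπ₀ ⟨x, hx⟩]
  rw [Finset.sum_congr rfl hfiber, Finset.sum_const, smul_eq_mul]
  congr 1
  -- J.card = descFactorial
  rw [← Fintype.card_subtype]
  have e : {g : {x // x ∈ U} → Fin D // Function.Injective g ∧ ∀ x, g x ∈ C'}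
      ≃ ({x // x ∈ U} ↪ {y // y ∈ C'}) :=
    { toFun := fun g => ⟨fun x => ⟨g.1 x, g.2.2 x⟩,
        fun a b h => g.2.1 (congrArg Subtype.val h)⟩
      invFun := fun emb => ⟨fun x => (emb x).1,
        fun a b h => emb.injective (Subtype.ext h), fun x => (emb x).2⟩
      left_inv := fun g => rfl
      right_inv := fun emb => by ext x; rfl }
  rw [Fintype.card_congr e, Fintype.card_embedding_eq, Fintype.card_coe, Fintype.card_coe]

open Finset

private def Amin (D k : ℕ) (π : Equiv.Perm (Fin D)) (U : Finset (Fin D)) (j : ℕ)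
    (s : Fin D) : Prop :=
  π s ∈ hashBin D k (U.image π) j ∧ ∀ y ∈ hashBin D k (U.image π) j, π s ≤ y

private lemma amin_unique {D k : ℕ} {π : Equiv.Perm (Fin D)} {U : Finset (Fin D)} {j : ℕ}
    {s s' : Fin D} (h : Amin D k π U j s) (h' : Amin D k π U j s') : s = s' :=
  π.injective (le_antisymm (h.2 _ h'.1) (h'.2 _ h.1))

private lemma hashBin_union (D k : ℕ) (π : Equiv.Perm (Fin D)) (S₁ S₂ : Finset (Fin D))
    (j : ℕ) :
    hashBin D k ((S₁ ∪ S₂).image π) j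
      = hashBin D k (S₁.image π) j ∪ hashBin D k (S₂.image π) j := by
  unfold hashBin
  rw [Finset.image_union, Finset.filter_union]

private lemma min_eq_coe {D : ℕ} {t : Finset (Fin D)} {v : Fin D} (hv : v ∈ t)
    (hle : ∀ y ∈ t, v ≤ y) : t.min = (v : WithTop (Fin D)) :=
  le_antisymm (Finset.min_le hv) (Finset.le_min (fun y hy => by exact_mod_cast hle y hy))

private lemma matched_iff {D k : ℕ} (π : Equiv.Perm (Fin D)) (S₁ S₂ : Finset (Fin D))
    (j : ℕ) :
    matchedBin D k π S₁ S₂ j ↔ ∃ s ∈ S₁ ∩ S₂, Amin D k π (S₁ ∪ S₂) j s := by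
  constructor
  · rintro ⟨h₁, h₂, hmin⟩
    set t₁ := hashBin D k (S₁.image π) j with ht₁
    set t₂ := hashBin D k (S₂.image π) j with ht₂
    set v₁ := t₁.min' h₁ with hv₁def
    have hv₁ : v₁ ∈ t₁ := t₁.min'_mem h₁
    have hmin₁ : t₁.min = (v₁ : WithTop (Fin D)) := (Finset.coe_min' h₁).symm
    have hv₁₂ : v₁ ∈ t₂ := Finset.mem_of_min (by rw [← hmin, hmin₁])
    have hv₁S₁ : v₁ ∈ S₁.image π ∧ (v₁ : Fin D).val / (D/k) = j := Finset.mem_filter.1 hv₁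
    have hv₁S₂ : v₁ ∈ S₂.image π := (Finset.mem_filter.1 hv₁₂).1
    obtain ⟨s₁, hs₁, hπs₁⟩ := Finset.mem_image.1 hv₁S₁.1
    obtain ⟨s₂, hs₂, hπs₂⟩ := Finset.mem_image.1 hv₁S₂
    have hs12 : s₂ = s₁ := π.injective (by rw [hπs₁, hπs₂])
    refine ⟨s₁, Finset.mem_inter.2 ⟨hs₁, hs12 ▸ hs₂⟩, ?_, ?_⟩
    · rw [hashBin_union]
      exact Finset.mem_union_left _ (by rw [hπs₁]; exact hv₁)
    · intro y hy
      rw [hashBin_union] at hy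
      rw [hπs₁]
      rcases Finset.mem_union.1 hy with hy1 | hy2
      · exact Finset.min'_le _ _ hy1
      · have : t₂.min ≤ y := Finset.min_le hy2
        rw [← hmin, hmin₁] at this
        exact_mod_cast this
  · rintro ⟨s, hs, h1, h2⟩
    have hsmem := Finset.mem_inter.1 hs
    have hbin : (π s).val / (D/k) = j := (Finset.mem_filter.1 h1).2
    have hm1 : π s ∈ hashBin D k (S₁.image π) j :=
      Finset.mem_filter.2 ⟨Finset.mem_image_of_mem π hsmem.1, hbin⟩
    have hm2 : π s ∈ hashBin D k (S₂.image π) j :=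
      Finset.mem_filter.2 ⟨Finset.mem_image_of_mem π hsmem.2, hbin⟩
    have hsub1 : hashBin D k (S₁.image π) j ⊆ hashBin D k ((S₁ ∪ S₂).image π) j := by
      rw [hashBin_union]; exact Finset.subset_union_left
    have hsub2 : hashBin D k (S₂.image π) j ⊆ hashBin D k ((S₁ ∪ S₂).image π) j := by
      rw [hashBin_union]; exact Finset.subset_union_right
    refine ⟨⟨π s, hm1⟩, ⟨π s, hm2⟩, ?_⟩
    rw [min_eq_coe hm1 (fun y hy => h2 y (hsub1 hy)),
      min_eq_coe hm2 (fun y hy => h2 y (hsub2 hy))]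

private lemma nonempty_iff_amin {D k : ℕ} (π : Equiv.Perm (Fin D)) (U : Finset (Fin D))
    (j : ℕ) :
    (hashBin D k (U.image π) j).Nonempty ↔ ∃ s ∈ U, Amin D k π U j s := by
  constructor
  · intro h
    set t := hashBin D k (U.image π) j with ht
    have hv₁ : t.min' h ∈ t := t.min'_mem h
    obtain ⟨s, hs, hπs⟩ := Finset.mem_image.1 (Finset.mem_filter.1 hv₁).1
    refine ⟨s, hs, by rw [hπs]; exact hv₁, fun y hy => by rw [hπs]; exact Finset.min'_le _ _ hy⟩
  · rintro ⟨s, hs, h1, h2⟩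
    exact ⟨π s, h1⟩

private lemma image_swap_eq {D : ℕ} {U : Finset (Fin D)} {s s' : Fin D}
    (hs : s ∈ U) (hs' : s' ∈ U) : U.image (Equiv.swap s s') = U := by
  apply Finset.eq_of_subset_of_card_le
  · intro x hx
    obtain ⟨y, hy, rfl⟩ := Finset.mem_image.1 hx
    rcases eq_or_ne y s with rfl | h1
    · rwa [Equiv.swap_apply_left]
    rcases eq_or_ne y s' with rfl | h2
    · rwa [Equiv.swap_apply_right]
    · rwa [Equiv.swap_apply_of_ne_of_ne h1 h2]
  · rw [Finset.card_image_of_injective _ (Equiv.injective _)]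

private lemma hashBin_swap {D k : ℕ} (π : Equiv.Perm (Fin D)) {U : Finset (Fin D)}
    {s s' : Fin D} (hs : s ∈ U) (hs' : s' ∈ U) (j : ℕ) :
    hashBin D k (U.image (π * Equiv.swap s s' : Equiv.Perm (Fin D))) j
      = hashBin D k (U.image π) j := by
  have : U.image (⇑(π * Equiv.swap s s')) = (U.image (Equiv.swap s s')).image π := by
    rw [Finset.image_image]; rfl
  rw [this, image_swap_eq hs hs']

private lemma amin_swap {D k : ℕ} (π : Equiv.Perm (Fin D)) {U : Finset (Fin D)}
    {s s' : Fin D} (hs : s ∈ U) (hs' : s' ∈ U) (j : ℕ) :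
    Amin D k (π * Equiv.swap s s') U j s' ↔ Amin D k π U j s := by
  unfold Amin
  rw [hashBin_swap π hs hs' j]
  have : (π * Equiv.swap s s') s' = π s := by
    simp [Equiv.Perm.mul_apply]
  rw [this]

private lemma sum_amin_swap {D k : ℕ} {U : Finset (Fin D)} {s s' : Fin D}
    (hs : s ∈ U) (hs' : s' ∈ U) (j : ℕ) (w : Equiv.Perm (Fin D) → ℝ)
    (hw : ∀ (π : Equiv.Perm (Fin D)) (x y : Fin D), x ∈ U → y ∈ U →
      w (π * Equiv.swap x y) = w π) :
    ∑ π : Equiv.Perm (Fin D), (if Amin D k π U j s then (1:ℝ) else 0) * w π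
      = ∑ π : Equiv.Perm (Fin D), (if Amin D k π U j s' then (1:ℝ) else 0) * w π := by
  have := Equiv.sum_comp (Equiv.mulRight (Equiv.swap s s'))
    (fun π : Equiv.Perm (Fin D) => (if Amin D k π U j s' then (1:ℝ) else 0) * w π)
  rw [← this]
  apply Finset.sum_congr rfl
  intro π _
  have h1 : Amin D k (π * Equiv.swap s s') U j s' ↔ Amin D k π U j s := amin_swap π hs hs' j
  have h2 : w (π * Equiv.swap s s') = w π := hw π s s' hs hs'
  simp only [Equiv.coe_mulRight, h2]
  congr 1
  simp only [h1]

private lemma indicator_exists_unique {D : ℕ} (T : Finset (Fin D)) (P : Fin D → Prop)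
    (huniq : ∀ x y, P x → P y → x = y) :
    (if ∃ s ∈ T, P s then (1:ℝ) else 0) = ∑ s ∈ T, (if P s then (1:ℝ) else 0) := by
  rw [Finset.sum_boole]
  by_cases h : ∃ s ∈ T, P s
  · rw [if_pos h]
    obtain ⟨s, hsT, hs⟩ := h
    have : T.filter P = {s} := by
      ext t
      simp only [Finset.mem_filter, Finset.mem_singleton]
      exact ⟨fun ⟨_, ht⟩ => huniq t s ht hs, fun ht => ht ▸ ⟨hsT, hs⟩⟩
    rw [this]; simp
  · rw [if_neg h]
    have : T.filter P = ∅ := by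
      ext t
      simp only [Finset.mem_filter, Finset.notMem_empty, iff_false, not_and]
      exact fun htT htP => h ⟨t, htT, htP⟩
    rw [this]; simp

private lemma exchange {D k : ℕ} (S₁ S₂ : Finset (Fin D)) (hU : (S₁ ∪ S₂).Nonempty)
    (j : ℕ) (w : Equiv.Perm (Fin D) → ℝ)
    (hw : ∀ (π : Equiv.Perm (Fin D)) (x y : Fin D), x ∈ S₁ ∪ S₂ → y ∈ S₁ ∪ S₂ →
      w (π * Equiv.swap x y) = w π) :
    ((S₁ ∪ S₂).card : ℝ) *
        ∑ π : Equiv.Perm (Fin D), (if matchedBin D k π S₁ S₂ j then (1:ℝ) else 0) * w π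
      = ((S₁ ∩ S₂).card : ℝ) *
        ∑ π : Equiv.Perm (Fin D),
          (if (hashBin D k ((S₁ ∪ S₂).image π) j).Nonempty then (1:ℝ) else 0) * w π := by
  obtain ⟨s₀, hs₀⟩ := hU
  set c₀ : ℝ := ∑ π : Equiv.Perm (Fin D),
    (if Amin D k π (S₁ ∪ S₂) j s₀ then (1:ℝ) else 0) * w π with hc₀
  have hM : ∑ π : Equiv.Perm (Fin D),
      (if matchedBin D k π S₁ S₂ j then (1:ℝ) else 0) * w π = ((S₁ ∩ S₂).card : ℝ) * c₀ := by
    have step : ∀ π : Equiv.Perm (Fin D),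
        (if matchedBin D k π S₁ S₂ j then (1:ℝ) else 0) * w π
          = ∑ s ∈ S₁ ∩ S₂, (if Amin D k π (S₁ ∪ S₂) j s then (1:ℝ) else 0) * w π := by
      intro π
      rw [← Finset.sum_mul]
      congr 1
      rw [← indicator_exists_unique (S₁ ∩ S₂) _ (fun x y hx hy => amin_unique hx hy)]
      congr 1
      simp only [matched_iff π S₁ S₂ j]
    rw [Finset.sum_congr rfl (fun π _ => step π), Finset.sum_comm]
    rw [Finset.sum_congr rfl (fun s hs => sum_amin_swap
      (Finset.mem_union_left _ (Finset.mem_inter.1 hs).1 : s ∈ S₁ ∪ S₂) hs₀ j w hw)]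
    rw [Finset.sum_const, nsmul_eq_mul]
  have hA : ∑ π : Equiv.Perm (Fin D),
      (if (hashBin D k ((S₁ ∪ S₂).image π) j).Nonempty then (1:ℝ) else 0) * w π
        = ((S₁ ∪ S₂).card : ℝ) * c₀ := by
    have step : ∀ π : Equiv.Perm (Fin D),
        (if (hashBin D k ((S₁ ∪ S₂).image π) j).Nonempty then (1:ℝ) else 0) * w π
          = ∑ s ∈ S₁ ∪ S₂, (if Amin D k π (S₁ ∪ S₂) j s then (1:ℝ) else 0) * w π := by
      intro π
      rw [← Finset.sum_mul]
      congr 1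
      rw [← indicator_exists_unique (S₁ ∪ S₂) _ (fun x y hx hy => amin_unique hx hy)]
      congr 1
      simp only [nonempty_iff_amin π (S₁ ∪ S₂) j]
    rw [Finset.sum_congr rfl (fun π _ => step π), Finset.sum_comm]
    rw [Finset.sum_congr rfl (fun s hs => sum_amin_swap hs hs₀ j w hw)]
    rw [Finset.sum_const, nsmul_eq_mul]
  rw [hM, hA]
  ring

private lemma bin_card {D k m : ℕ} (hD : D = k * m) (hm0 : 0 < m) {j : ℕ} (hj : j < k) :
    (Finset.univ.filter (fun y : Fin D => y.val / m = j)).card = m := by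
  have hbound : ∀ a ∈ Finset.Ico (j*m) (j*m+m), a < D := by
    intro a ha
    rw [Finset.mem_Ico] at ha
    have : j + 1 ≤ k := hj
    calc a < j*m + m := ha.2
      _ = (j+1)*m := by ring
      _ ≤ k*m := Nat.mul_le_mul_right m this
      _ = D := hD.symm
  have : Finset.univ.filter (fun y : Fin D => y.val / m = j)
      = (Finset.Ico (j*m) (j*m+m)).attachFin hbound := by
    ext y
    simp only [Finset.mem_filter, Finset.mem_univ, true_and, Finset.mem_attachFin,
      Finset.mem_Ico]
    constructor
    · intro h
      constructor
      · calc j*m = (y.val/m)*m := by rw [h]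
          _ ≤ y.val := Nat.div_mul_le_self _ _
      · have : y.val / m < j + 1 := by omega
        have := (Nat.div_lt_iff_lt_mul hm0).1 this
        calc (y.val : ℕ) < (j+1)*m := this
          _ = j*m + m := by ring
    · intro ⟨h1, h2⟩
      exact Nat.div_eq_of_lt_le h1
        (by rw [show (j+1)*m = j*m + m from by ring]; exact h2)
  rw [this, Finset.card_attachFin, Nat.card_Ico]
  omega

private lemma empty_iff_avoid {D k : ℕ} (π : Equiv.Perm (Fin D)) (U : Finset (Fin D))
    (j : ℕ) :
    hashBin D k (U.image π) j = ∅
      ↔ ∀ x ∈ U, π x ∈ Finset.univ.filter (fun y : Fin D => ¬ (y.val / (D/k) = j)) := by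
  unfold hashBin
  rw [Finset.filter_eq_empty_iff]
  constructor
  · intro h x hx
    simp only [Finset.mem_filter, Finset.mem_univ, true_and]
    exact h (Finset.mem_image_of_mem π hx)
  · intro h y hy
    obtain ⟨x, hx, rfl⟩ := Finset.mem_image.1 hy
    have := h x hx
    simp only [Finset.mem_filter, Finset.mem_univ, true_and] at this
    exact this

private lemma empty_pair_iff_avoid {D k : ℕ} (π : Equiv.Perm (Fin D)) (U : Finset (Fin D))
    (i j : ℕ) :
    (hashBin D k (U.image π) i = ∅ ∧ hashBin D k (U.image π) j = ∅)
      ↔ ∀ x ∈ U, π x ∈ Finset.univ.filter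
          (fun y : Fin D => ¬ (y.val / (D/k) = i) ∧ ¬ (y.val / (D/k) = j)) := by
  rw [empty_iff_avoid π U i, empty_iff_avoid π U j]
  constructor
  · intro ⟨h1, h2⟩ x hx
    have a1 := h1 x hx; have a2 := h2 x hx
    simp only [Finset.mem_filter, Finset.mem_univ, true_and] at a1 a2 ⊢
    exact ⟨a1, a2⟩
  · intro h
    constructor <;> intro x hx <;> have := h x hx <;>
      simp only [Finset.mem_filter, Finset.mem_univ, true_and] at this ⊢
    · exact this.1
    · exact this.2

private lemma avoid_card_one {D k m : ℕ} (hD : D = k * m) (hm0 : 0 < m) {j : ℕ}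
    (hj : j < k) :
    (Finset.univ.filter (fun y : Fin D => ¬ (y.val / m = j))).card = D - m := by
  have h := Finset.card_filter_add_card_filter_not
    (s := (Finset.univ : Finset (Fin D))) (p := fun y : Fin D => y.val / m = j)
  rw [bin_card hD hm0 hj] at h
  simp only [Finset.card_univ, Fintype.card_fin] at h
  omega

private lemma avoid_card_two {D k m : ℕ} (hD : D = k * m) (hm0 : 0 < m) {i j : ℕ}
    (hi : i < k) (hj : j < k) (hij : i ≠ j) :
    (Finset.univ.filter
      (fun y : Fin D => ¬ (y.val / m = i) ∧ ¬ (y.val / m = j))).card = D - 2*m := by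
  have hpred : ∀ y : Fin D, (¬ (y.val / m = i) ∧ ¬ (y.val / m = j))
      ↔ ¬ (y.val / m = i ∨ y.val / m = j) := by
    intro y; tauto
  rw [Finset.filter_congr (fun y _ => hpred y)]
  have h := Finset.card_filter_add_card_filter_not
    (s := (Finset.univ : Finset (Fin D))) (p := fun y : Fin D => y.val / m = i ∨ y.val / m = j)
  have hsplit : Finset.univ.filter (fun y : Fin D => y.val / m = i ∨ y.val / m = j)
      = Finset.univ.filter (fun y : Fin D => y.val / m = i)
        ∪ Finset.univ.filter (fun y : Fin D => y.val / m = j) := by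
    rw [← Finset.filter_or]
  have hdisj : Disjoint (Finset.univ.filter (fun y : Fin D => y.val / m = i))
      (Finset.univ.filter (fun y : Fin D => y.val / m = j)) := by
    rw [Finset.disjoint_filter]
    intro y _ h1 h2
    exact hij (h1 ▸ h2 ▸ rfl)
  rw [hsplit, Finset.card_union_of_disjoint hdisj, bin_card hD hm0 hi, bin_card hD hm0 hj] at h
  simp only [Finset.card_univ, Fintype.card_fin] at h
  omega

set_option maxHeartbeats 2000000 in
/-- The numbers of matched bins and of jointly empty bins are negatively correlated:
`Cov(N_mat, N_emp) ≤ 0`. -/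
theorem stmt_19 (D k f : ℕ) (hk : 2 ≤ k) (hkD : k ∣ D)
    (S₁ S₂ : Finset (Fin D)) (hf : (S₁ ∪ S₂).card = f)
    (hf1 : 1 ≤ f) (hfD : f ≤ D - 2 * (D / k)) :
    let N : ℝ := (Fintype.card (Equiv.Perm (Fin D)) : ℝ)
    (∑ π : Equiv.Perm (Fin D), (Nmat D k π S₁ S₂ : ℝ) * (NempJ D k π S₁ S₂ : ℝ)) / N
        - ((∑ π : Equiv.Perm (Fin D), (Nmat D k π S₁ S₂ : ℝ)) / N) *
          ((∑ π : Equiv.Perm (Fin D), (NempJ D k π S₁ S₂ : ℝ)) / N)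
      ≤ 0 := by
  intro N
  classical
  set m := D / k with hmdef
  have hUcard : 0 < (S₁ ∪ S₂).card := by omega
  have hD0 : 0 < D := by
    obtain ⟨x, hx⟩ := Finset.card_pos.mp hUcard
    exact x.pos
  have hDkm : D = k * m := (Nat.mul_div_cancel' hkD).symm
  have hm0 : 0 < m := by
    rcases Nat.eq_zero_or_pos m with h | h
    · rw [h, Nat.mul_zero] at hDkm; omega
    · exact h
  have hfD' : f ≤ D - 2*m := hfD
  have hfle : f ≤ D := by
    have := Finset.card_le_univ (S₁ ∪ S₂)
    simp only [Finset.card_univ, Fintype.card_fin] at this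
    omega
  have hUne : (S₁ ∪ S₂).Nonempty := Finset.card_pos.mp hUcard
  set a := (S₁ ∩ S₂).card with hadef
  set A := D.descFactorial f with hAdef
  set B := (D - m).descFactorial f with hBdef
  set C := (D - 2*m).descFactorial f with hCdef
  set F := Nat.factorial (D - f) with hFdef
  -- indicator functions
  set IM : ℕ → Equiv.Perm (Fin D) → ℝ :=
    fun i π => if matchedBin D k π S₁ S₂ i then 1 else 0 with hIM
  set IE : ℕ → Equiv.Perm (Fin D) → ℝ :=
    fun j π => if hashBin D k ((S₁ ∪ S₂).image π) j = ∅ then 1 else 0 with hIE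
  set IA : ℕ → Equiv.Perm (Fin D) → ℝ :=
    fun j π => if (hashBin D k ((S₁ ∪ S₂).image π) j).Nonempty then 1 else 0 with hIA
  have hIAE : ∀ j π, IA j π = 1 - IE j π := by
    intro j π
    rw [hIA, hIE]
    by_cases h : hashBin D k ((S₁ ∪ S₂).image π) j = ∅
    · simp [h, Finset.nonempty_iff_ne_empty]
    · simp [h, Finset.nonempty_iff_ne_empty]
  -- Nmat/NempJ as indicator sums
  have hNmat : ∀ π : Equiv.Perm (Fin D),
      (Nmat D k π S₁ S₂ : ℝ) = ∑ i ∈ Finset.range k, IM i π := by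
    intro π
    rw [Nmat, Finset.card_filter, Nat.cast_sum]
    exact Finset.sum_congr rfl fun i _ => by rw [hIM]; split_ifs with h <;> simp [h]
  have hNemp : ∀ π : Equiv.Perm (Fin D),
      (NempJ D k π S₁ S₂ : ℝ) = ∑ j ∈ Finset.range k, IE j π := by
    intro π
    rw [NempJ, Finset.card_filter, Nat.cast_sum]
    refine Finset.sum_congr rfl fun j _ => ?_
    have hiff : (hashBin D k (S₁.image π) j = ∅ ∧ hashBin D k (S₂.image π) j = ∅)
        ↔ hashBin D k ((S₁ ∪ S₂).image π) j = ∅ := by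
      rw [hashBin_union, Finset.union_eq_empty]
    rw [hIE]
    simp only [hiff]
    split_ifs with h <;> simp [h]
  -- counting sums
  have hEsum : ∀ j < k, ∑ π : Equiv.Perm (Fin D), IE j π = ((B * F : ℕ) : ℝ) := by
    intro j hj
    rw [hIE]
    simp only []
    rw [Finset.sum_boole]
    congr 1
    rw [Finset.filter_congr (fun π _ => empty_iff_avoid π (S₁ ∪ S₂) j), count_perm, hf,
      ← hmdef, avoid_card_one hDkm hm0 hj, hBdef, hFdef]
  have hEEsum : ∀ i j, i < k → j < k → i ≠ j →
      ∑ π : Equiv.Perm (Fin D), IE i π * IE j π = ((C * F : ℕ) : ℝ) := by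
    intro i j hi hj hij
    have hpt : ∀ π : Equiv.Perm (Fin D), IE i π * IE j π =
        if (hashBin D k ((S₁ ∪ S₂).image π) i = ∅ ∧
            hashBin D k ((S₁ ∪ S₂).image π) j = ∅) then (1:ℝ) else 0 := by
      intro π
      rw [hIE]
      simp only []
      by_cases h1 : hashBin D k ((S₁ ∪ S₂).image π) i = ∅ <;>
        by_cases h2 : hashBin D k ((S₁ ∪ S₂).image π) j = ∅ <;>
        simp [h1, h2]
    rw [Finset.sum_congr rfl fun π _ => hpt π, Finset.sum_boole]
    congr 1
    rw [Finset.filter_congr (fun π _ => empty_pair_iff_avoid π (S₁ ∪ S₂) i j), count_perm, hf,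
      ← hmdef, avoid_card_two hDkm hm0 hi hj hij, hCdef, hFdef]
  -- invariance of IE under swaps within the union
  have hwIE : ∀ j, ∀ (π : Equiv.Perm (Fin D)) (x y : Fin D),
      x ∈ S₁ ∪ S₂ → y ∈ S₁ ∪ S₂ → IE j (π * Equiv.swap x y) = IE j π := by
    intro j π x y hx hy
    rw [hIE]
    simp only [hashBin_swap π hx hy j]
  have hNval : N = ((A * F : ℕ) : ℝ) := by
    have h1 : Fintype.card (Equiv.Perm (Fin D)) = Nat.factorial D := by
      rw [Fintype.card_perm, Fintype.card_fin]
    have h2 : F * A = Nat.factorial D := Nat.factorial_mul_descFactorial hfle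
    rw [show N = ((Fintype.card (Equiv.Perm (Fin D)) : ℕ) : ℝ) from rfl, h1, ← h2]
    push_cast
    ring
  have hNuniv : ∑ π : Equiv.Perm (Fin D), (1:ℝ) = N := by
    rw [Finset.sum_const, Finset.card_univ, nsmul_eq_mul, mul_one]
  -- exchange applications
  have hexch1 : ∀ i j, (f:ℝ) * ∑ π : Equiv.Perm (Fin D), IM i π * IE j π
      = (a:ℝ) * ∑ π : Equiv.Perm (Fin D), IA i π * IE j π := by
    intro i j
    have := exchange (D := D) (k := k) S₁ S₂ hUne i (IE j) (hwIE j)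
    rw [hf] at this
    exact this
  have hexch2 : ∀ i, (f:ℝ) * ∑ π : Equiv.Perm (Fin D), IM i π
      = (a:ℝ) * ∑ π : Equiv.Perm (Fin D), IA i π := by
    intro i
    have := exchange (D := D) (k := k) S₁ S₂ hUne i (fun _ => (1:ℝ)) (fun _ _ _ _ _ => rfl)
    rw [hf] at this
    calc (f:ℝ) * ∑ π : Equiv.Perm (Fin D), IM i π
        = (f:ℝ) * ∑ π : Equiv.Perm (Fin D), IM i π * 1 := by simp only [mul_one]
      _ = (a:ℝ) * ∑ π : Equiv.Perm (Fin D), IA i π * 1 := this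
      _ = (a:ℝ) * ∑ π : Equiv.Perm (Fin D), IA i π := by simp only [mul_one]
  -- diagonal vanishing
  have hdiag : ∀ i (π : Equiv.Perm (Fin D)), IM i π * IE i π = 0 := by
    intro i π
    rw [hIM, hIE]
    simp only []
    by_cases h1 : matchedBin D k π S₁ S₂ i
    swap
    · simp [h1]
    by_cases h2 : hashBin D k ((S₁ ∪ S₂).image π) i = ∅
    swap
    · simp [h1, h2]
    · exfalso
      obtain ⟨hne, -, -⟩ := h1
      have hsub : hashBin D k (S₁.image π) i ⊆ hashBin D k ((S₁ ∪ S₂).image π) i := by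
        rw [hashBin_union]; exact Finset.subset_union_left
      obtain ⟨v, hv⟩ := hne
      have := hsub hv
      rw [h2] at this
      exact absurd this (Finset.notMem_empty v)
  -- real abbreviations
  have hk1 : 1 ≤ k := by omega
  set er : ℝ := ((B * F : ℕ) : ℝ) with herdef
  set gr : ℝ := ((C * F : ℕ) : ℝ) with hgrdef
  -- main identities
  have hSe : ∑ π : Equiv.Perm (Fin D), (NempJ D k π S₁ S₂ : ℝ) = (k:ℝ) * er := by
    rw [Finset.sum_congr rfl fun π _ => hNemp π, Finset.sum_comm]
    rw [Finset.sum_congr rfl fun j hj => hEsum j (Finset.mem_range.1 hj)]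
    rw [Finset.sum_const, Finset.card_range, nsmul_eq_mul]
  have hAEsum : ∀ j < k, ∑ π : Equiv.Perm (Fin D), IA j π = N - er := by
    intro j hj
    rw [Finset.sum_congr rfl fun π _ => hIAE j π, Finset.sum_sub_distrib, hNuniv,
      hEsum j hj]
  have hSm : (f:ℝ) * ∑ π : Equiv.Perm (Fin D), (Nmat D k π S₁ S₂ : ℝ)
      = (k:ℝ) * ((a:ℝ) * (N - er)) := by
    rw [Finset.sum_congr rfl fun π _ => hNmat π, Finset.sum_comm, Finset.mul_sum]
    rw [Finset.sum_congr rfl fun i hi => (hexch2 i).trans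
      (by rw [hAEsum i (Finset.mem_range.1 hi)])]
    rw [Finset.sum_const, Finset.card_range, nsmul_eq_mul]
  have hcross : ∀ i ∈ Finset.range k, ∀ j ∈ Finset.range k,
      (f:ℝ) * ∑ π : Equiv.Perm (Fin D), IM i π * IE j π
        = if i = j then 0 else (a:ℝ) * (er - gr) := by
    intro i hi j hj
    rcases eq_or_ne i j with rfl | hij
    · rw [if_pos rfl]
      rw [Finset.sum_congr rfl fun π _ => hdiag i π]
      simp
    · rw [if_neg hij, hexch1 i j]
      congr 1
      have hsplit : ∀ π : Equiv.Perm (Fin D), IA i π * IE j π = IE j π - IE i π * IE j π := by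
        intro π
        rw [hIAE]
        ring
      rw [Finset.sum_congr rfl fun π _ => hsplit π, Finset.sum_sub_distrib,
        hEsum j (Finset.mem_range.1 hj),
        hEEsum i j (Finset.mem_range.1 hi) (Finset.mem_range.1 hj) hij]
  have hSmm : (f:ℝ) * ∑ π : Equiv.Perm (Fin D),
      (Nmat D k π S₁ S₂ : ℝ) * (NempJ D k π S₁ S₂ : ℝ)
      = (k:ℝ) * (((a:ℝ) * (er - gr)) * ((k:ℝ) - 1)) := by
    have h1 : ∀ π : Equiv.Perm (Fin D),
        (Nmat D k π S₁ S₂ : ℝ) * (NempJ D k π S₁ S₂ : ℝ)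
          = ∑ i ∈ Finset.range k, ∑ j ∈ Finset.range k, IM i π * IE j π := by
      intro π
      rw [hNmat, hNemp, Finset.sum_mul_sum]
    rw [Finset.sum_congr rfl fun π _ => h1 π, Finset.sum_comm, Finset.mul_sum]
    have h2 : ∀ i ∈ Finset.range k,
        (f:ℝ) * ∑ π : Equiv.Perm (Fin D), ∑ j ∈ Finset.range k, IM i π * IE j π
          = ((a:ℝ) * (er - gr)) * ((k:ℝ) - 1) := by
      intro i hi
      rw [Finset.sum_comm, Finset.mul_sum]
      rw [Finset.sum_congr rfl fun j hj => hcross i hi j hj]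
      have h3 : ∀ j, (if i = j then (0:ℝ) else (a:ℝ)*(er-gr))
          = (a:ℝ)*(er-gr) - (if i = j then (a:ℝ)*(er-gr) else 0) := by
        intro j; split_ifs <;> ring
      rw [Finset.sum_congr rfl fun j _ => h3 j, Finset.sum_sub_distrib,
        Finset.sum_const, Finset.card_range, Finset.sum_ite_eq, if_pos hi, nsmul_eq_mul]
      ring
    rw [Finset.sum_congr rfl h2, Finset.sum_const, Finset.card_range, nsmul_eq_mul]
  -- key inequality, cast to ℝ
  have keyN : k * (B * B) ≤ A * B + (k-1) * (A * C) := by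
    have h := key_ineq k m hm0 hk f (by omega)
    rw [← hDkm] at h
    exact h
  have keyR : (k:ℝ) * ((B:ℝ) * B) ≤ (A:ℝ) * B + ((k:ℝ) - 1) * ((A:ℝ) * C) := by
    have := (Nat.cast_le (α := ℝ)).2 keyN
    push_cast [Nat.cast_sub hk1] at this
    convert this using 2 <;> push_cast <;> ring
  have hF0 : (0:ℝ) < (F:ℝ) :=
    Nat.cast_pos.2 (by rw [hFdef]; exact Nat.factorial_pos _)
  have hNpos : (0:ℝ) < N := by
    show (0:ℝ) < ((Fintype.card (Equiv.Perm (Fin D)) : ℕ) : ℝ)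
    exact_mod_cast (Fintype.card_pos : 0 < Fintype.card (Equiv.Perm (Fin D)))
  have KEYR2 : (k:ℝ) * ((k:ℝ)-1) * (er - gr) * N ≤ (k:ℝ) * (k:ℝ) * (N - er) * er := by
    rw [herdef, hgrdef, hNval]
    push_cast
    have base : (0:ℝ) ≤ (A:ℝ) * B + ((k:ℝ) - 1) * ((A:ℝ) * C) - (k:ℝ) * ((B:ℝ) * B) := by
      linarith [keyR]
    have hint : (0:ℝ) ≤ (k:ℝ) * ((F:ℝ) * F) *
        ((A:ℝ) * B + ((k:ℝ) - 1) * ((A:ℝ) * C) - (k:ℝ) * ((B:ℝ) * B)) := by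
      apply mul_nonneg
      · positivity
      · exact base
    nlinarith [hint]
  -- final assembly
  have hf0 : (0:ℝ) < (f:ℝ) := by exact_mod_cast hf1
  have ha0 : (0:ℝ) ≤ (a:ℝ) := Nat.cast_nonneg a
  set Smm : ℝ := ∑ π : Equiv.Perm (Fin D),
    (Nmat D k π S₁ S₂ : ℝ) * (NempJ D k π S₁ S₂ : ℝ) with hSmmdef
  set Sm : ℝ := ∑ π : Equiv.Perm (Fin D), (Nmat D k π S₁ S₂ : ℝ) with hSmdef
  set Se : ℝ := ∑ π : Equiv.Perm (Fin D), (NempJ D k π S₁ S₂ : ℝ) with hSedef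
  clear_value N Smm Sm Se
  rw [sub_nonpos, div_mul_div_comm, div_le_div_iff₀ hNpos (mul_pos hNpos hNpos)]
  have step : (f:ℝ) * (Smm * (N * N)) ≤ (f:ℝ) * (Sm * Se * N) := by
    have l1 : (f:ℝ) * (Smm * (N * N)) = ((f:ℝ) * Smm) * (N * N) := by ring
    have l2 : (f:ℝ) * (Sm * Se * N) = ((f:ℝ) * Sm) * Se * N := by ring
    rw [l1, l2, hSmm, hSm, hSe]
    have hmono := mul_le_mul_of_nonneg_left KEYR2 (mul_nonneg ha0 (le_of_lt hNpos))
    nlinarith [hmono]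
  have := le_of_mul_le_mul_left step hf0
  linarith [this]
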